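/- arXiv:1803.01480 — 2 statements merged into one kernel-verified Lean document; each statement's English description precedes it below -/
import Mathlib

section
/- For sequences A, B of length n over the integers and odd shift s, the interleaved sequence A x B of length 2n satisfies PAF_{A x B}(s) = PCF_{A,B}((s-1)/2) + PCF_{B,A}((s+1)/2). -/
open Finset

/-- Periodic cross-correlation of two integer sequences of length `n`. -/
def PCF (n : ℕ) (X Y : ℕ → ℤ) (s : ℕ) : ℤ :=
  ∑ k ∈ Finset.range n, X k * Y ((k + s) % n)

/-- Periodic autocorrelation of an integer sequence of length `n`. -/
def PAF (n : ℕ) (X : ℕ → ℤ) (s : ℕ) : ℤ :=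
  PCF n X X s

/-- Interleaving (perfect shuffle) of two sequences. -/
def interleave (X Y : ℕ → ℤ) : ℕ → ℤ :=
  fun k => if k % 2 = 0 then X (k / 2) else Y (k / 2)

/-- Entrywise negation of a sequence. -/
def negSeq (X : ℕ → ℤ) : ℕ → ℤ :=
  fun k => -X k

/-- Cyclic shift of a length-`n` sequence by offset `m`. -/
def cshift (n m : ℕ) (X : ℕ → ℤ) : ℕ → ℤ :=
  fun k => X ((k + (n - m % n)) % n)

/-- A ±1 sequence of length `n`. -/
def IsPM1 (n : ℕ) (X : ℕ → ℤ) : Prop :=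
  ∀ k < n, X k = 1 ∨ X k = -1

/-- A symmetric sequence of length `n`: `x_k = x_{n-k}` for `k = 1, …, n-1`. -/
def SeqSymm (n : ℕ) (X : ℕ → ℤ) : Prop :=
  ∀ k, 1 ≤ k → k < n → X k = X (n - k)


lemma sum_range_two_mul (n : ℕ) (g : ℕ → ℤ) :
    ∑ k ∈ Finset.range (2*n), g k = ∑ j ∈ Finset.range n, (g (2*j) + g (2*j+1)) := by
  induction n with
  | zero => simp
  | succ m ih =>
      rw [show 2*(m+1) = 2*m+1+1 from by ring, Finset.sum_range_succ, Finset.sum_range_succ,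
        Finset.sum_range_succ, ih]
      ring

lemma even_mod (n m : ℕ) : (2*m) % (2*n) = 2*(m%n) := Nat.mul_mod_mul_left 2 m n

lemma odd_mod (n m : ℕ) : (2*m+1) % (2*n) = 2*(m%n)+1 := by
  rcases Nat.eq_zero_or_pos n with h|h
  · simp [h]
  · have h1 := Nat.mul_mod_mul_left 2 m n
    have h2 : m % n < n := Nat.mod_lt _ h
    have h3 : 1 % (2*n) = 1 := Nat.mod_eq_of_lt (by omega)
    rw [Nat.add_mod, h1, h3, Nat.mod_eq_of_lt (by omega)]

theorem paf_interleave_odd (n : ℕ) (A B : ℕ → ℤ) (s : ℕ) (hs : s % 2 = 1) :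
    PAF (2 * n) (interleave A B) s = PCF n A B ((s - 1) / 2) + PCF n B A ((s + 1) / 2) := by
  obtain ⟨t, ht⟩ : ∃ t, s = 2*t+1 := ⟨s/2, by omega⟩
  subst ht
  unfold PAF PCF
  rw [sum_range_two_mul, ← Finset.sum_add_distrib]
  apply Finset.sum_congr rfl
  intro j hj
  have hA : ∀ m, interleave A B (2*m) = A m := by
    intro m; simp [interleave, Nat.mul_mod_right, Nat.mul_div_cancel_left]
  have hB : ∀ m, interleave A B (2*m+1) = B m := by
    intro m
    simp [interleave, Nat.add_mul_mod_self_left, Nat.mul_add_div, Nat.mul_add_mod]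
  have e1 : (2*j + (2*t+1)) % (2*n) = 2*((j+t)%n)+1 := by
    rw [show 2*j + (2*t+1) = 2*(j+t)+1 from by ring, odd_mod]
  have e2 : (2*j+1 + (2*t+1)) % (2*n) = 2*((j+t+1)%n) := by
    rw [show 2*j+1 + (2*t+1) = 2*(j+t+1) from by ring, even_mod]
  rw [e1, e2, hA, hB, hA, hB]
  have : (2*t+1-1)/2 = t := by omega
  rw [this]
  have : (2*t+1+1)/2 = t+1 := by omega
  rw [this]
  ring_nf
end

section
/- Corollary of the doubling theorem: if there exist Williamson sequences of odd order n, then there exist Williamson sequences of order 2n. -/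
open Finset

/- ### Auxiliary lemmas -/

lemma interleave_even' (X Y : ℕ → ℤ) (j : ℕ) : interleave X Y (2*j) = X j := by
  unfold interleave
  rw [if_pos (by omega : 2*j % 2 = 0)]
  congr 1
  omega

lemma interleave_odd' (X Y : ℕ → ℤ) (j : ℕ) : interleave X Y (2*j+1) = Y j := by
  unfold interleave
  rw [if_neg (by omega : ¬ (2*j+1) % 2 = 0)]
  congr 1
  omega

lemma sum_two_mul (n : ℕ) (f : ℕ → ℤ) :
    ∑ k ∈ Finset.range (2*n), f k
      = ∑ j ∈ Finset.range n, f (2*j) + ∑ j ∈ Finset.range n, f (2*j+1) := by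
  induction n with
  | zero => simp
  | succ m ih =>
      have h : 2*(m+1) = (2*m)+1+1 := by ring
      rw [h, Finset.sum_range_succ, Finset.sum_range_succ, ih,
          Finset.sum_range_succ, Finset.sum_range_succ]
      ring

lemma paf_interleave_neg_add (n s : ℕ) (hs : s % 2 = 1) (X Y : ℕ → ℤ) :
    PAF (2*n) (interleave X Y) s + PAF (2*n) (interleave X (negSeq Y)) s = 0 := by
  unfold PAF PCF
  rw [← Finset.sum_add_distrib]
  apply Finset.sum_eq_zero
  intro k _
  have h2 : ((k + s) % (2*n)) % 2 = (k + s) % 2 := Nat.mod_mod_of_dvd _ ⟨n, rfl⟩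
  rcases Nat.mod_two_eq_zero_or_one k with hk0 | hk1
  · have hm : ((k+s) % (2*n)) % 2 = 1 := by omega
    simp only [interleave, negSeq, hk0, hm]
    norm_num
  · have hm : ((k+s) % (2*n)) % 2 = 0 := by omega
    simp only [interleave, negSeq, hk1, hm]
    norm_num

lemma paf_interleave_even (n t : ℕ) (hn : 0 < n) (X Y : ℕ → ℤ) :
    PAF (2*n) (interleave X Y) (2*t) = PAF n X t + PAF n Y t := by
  unfold PAF PCF
  rw [sum_two_mul]
  congr 1
  · apply Finset.sum_congr rfl
    intro j _
    have h1 : (2*j + 2*t) % (2*n) = 2 * ((j+t) % n) := by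
      rw [(by ring : 2*j+2*t = 2*(j+t)), Nat.mul_mod_mul_left]
    rw [h1, interleave_even', interleave_even']
  · apply Finset.sum_congr rfl
    intro j _
    have h2 : 2*j+1 + 2*t = 2*((j+t)%n)+1 + ((j+t)/n)*(2*n) := by
      rw [(show 2*j+1+2*t = 2*(j+t)+1 by ring)]
      conv_lhs => rw [← Nat.div_add_mod (j+t) n]
      ring
    have h1 : (2*j+1 + 2*t) % (2*n) = 2 * ((j+t) % n) + 1 := by
      rw [h2, Nat.add_mul_mod_self_right,
          Nat.mod_eq_of_lt (by have := Nat.mod_lt (j+t) hn; omega)]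
    rw [h1, interleave_odd', interleave_odd']

lemma sum_shift (n c : ℕ) (hn : 0 < n) (f : ℕ → ℤ) :
    ∑ k ∈ Finset.range n, f ((k + c) % n) = ∑ k ∈ Finset.range n, f k := by
  obtain ⟨p, hp⟩ : ∃ p, n * (c / n) = p := ⟨_, rfl⟩
  have hq2 : p + c % n = c := by rw [← hp]; exact Nat.div_add_mod c n
  have hr : c % n < n := Nat.mod_lt c hn
  apply Finset.sum_nbij' (i := fun k => (k + c) % n) (j := fun k => (k + (n - c % n)) % n)
  · intro a _; exact Finset.mem_range.mpr (Nat.mod_lt _ hn)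
  · intro a _; exact Finset.mem_range.mpr (Nat.mod_lt _ hn)
  · intro a ha
    rw [Nat.mod_add_mod]
    have key : a + c + (n - c % n) = a + n + p := by omega
    rw [key, ← hp, Nat.add_mul_mod_self_left, Nat.add_mod_right,
        Nat.mod_eq_of_lt (Finset.mem_range.mp ha)]
  · intro a ha
    rw [Nat.mod_add_mod]
    have key : a + (n - c % n) + c = a + n + p := by omega
    rw [key, ← hp, Nat.add_mul_mod_self_left, Nat.add_mod_right,
        Nat.mod_eq_of_lt (Finset.mem_range.mp ha)]
  · intro a _; rfl

lemma shift_paf (n c t : ℕ) (hn : 0 < n) (B : ℕ → ℤ) :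
    PAF n (fun k => B ((k + c) % n)) t = PAF n B t := by
  unfold PAF PCF
  have step1 : ∀ k : ℕ, B ((k+c)%n) * B (((k+t)%n + c) % n)
      = (fun j => B (j % n) * B ((j + t) % n)) ((k+c)%n) := by
    intro k
    simp only
    rw [Nat.mod_add_mod, Nat.mod_add_mod, Nat.mod_mod_of_dvd _ dvd_rfl,
        (show k+t+c = k+c+t by ring)]
  calc ∑ k ∈ Finset.range n, B ((k+c)%n) * B (((k+t)%n + c) % n)
      = ∑ k ∈ Finset.range n, (fun j => B (j % n) * B ((j + t) % n)) ((k+c)%n) :=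
        Finset.sum_congr rfl (fun k _ => step1 k)
    _ = ∑ k ∈ Finset.range n, (fun j => B (j % n) * B ((j + t) % n)) k :=
        by exact sum_shift n c hn (fun j => B (j % n) * B ((j + t) % n))
    _ = ∑ k ∈ Finset.range n, B k * B ((k+t)%n) := by
        apply Finset.sum_congr rfl
        intro k hk
        simp only
        rw [Nat.mod_eq_of_lt (Finset.mem_range.mp hk)]

lemma neg_paf (n t : ℕ) (Y : ℕ → ℤ) : PAF n (negSeq Y) t = PAF n Y t := by
  simp [PAF, PCF, negSeq]

lemma shift_symm (n c : ℕ) (hc : 2*c = n+1) (B : ℕ → ℤ) (hB : SeqSymm n B) :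
    ∀ j < n, B ((j+c)%n) = B ((n-1-j+c)%n) := by
  intro j hj
  rcases Nat.lt_trichotomy (j+c) n with h | h | h
  · have ha : (j+c)%n = j+c := Nat.mod_eq_of_lt h
    have hb : (n-1-j+c)%n = c-1-j := by
      rw [(show n-1-j+c = n + (c-1-j) by omega), Nat.add_mod_left,
          Nat.mod_eq_of_lt (by omega)]
    rw [ha, hb, hB (j+c) (by omega) h]
    congr 1
    omega
  · have ha : (j+c)%n = 0 := by rw [h, Nat.mod_self]
    have hb : (n-1-j+c)%n = 0 := by
      rw [(show n-1-j+c = n by omega), Nat.mod_self]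
    rw [ha, hb]
  · have ha : (j+c)%n = j+c-n := by
      conv_lhs => rw [(show j+c = n + (j+c-n) by omega)]
      rw [Nat.add_mod_left, Nat.mod_eq_of_lt (by omega)]
    have hb : (n-1-j+c)%n = n-1-j+c := Nat.mod_eq_of_lt (by omega)
    rw [ha, hb, hB (j+c-n) (by omega) (by omega)]
    congr 1
    omega

lemma interleave_symm (n : ℕ) (X Y : ℕ → ℤ) (hX : SeqSymm n X)
    (hY : ∀ j < n, Y j = Y (n-1-j)) : SeqSymm (2*n) (interleave X Y) := by
  intro k h1 h2
  unfold interleave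
  rcases Nat.mod_two_eq_zero_or_one k with hk | hk
  · have hm : (2*n - k) % 2 = 0 := by omega
    rw [if_pos hk, if_pos hm, (show (2*n-k)/2 = n - k/2 by omega)]
    exact hX (k/2) (by omega) (by omega)
  · have hm : (2*n - k) % 2 = 1 := by omega
    rw [if_neg (by omega), if_neg (by omega),
        (show (2*n-k)/2 = n - 1 - k/2 by omega)]
    exact hY (k/2) (by omega)

lemma interleave_pm1 (n : ℕ) (X Y : ℕ → ℤ) (hX : IsPM1 n X) (hY : IsPM1 n Y) :
    IsPM1 (2*n) (interleave X Y) := by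
  intro k hk
  unfold interleave
  split
  · exact hX _ (by omega)
  · exact hY _ (by omega)

theorem williamson_doubling_exists (n : ℕ) (hn : Odd n)
    (h : ∃ A B C D : ℕ → ℤ,
      IsPM1 n A ∧ IsPM1 n B ∧ IsPM1 n C ∧ IsPM1 n D ∧
      SeqSymm n A ∧ SeqSymm n B ∧ SeqSymm n C ∧ SeqSymm n D ∧
      ∀ s, 1 ≤ s → s < n → PAF n A s + PAF n B s + PAF n C s + PAF n D s = 0) :
    ∃ A B C D : ℕ → ℤ,
      IsPM1 (2 * n) A ∧ IsPM1 (2 * n) B ∧ IsPM1 (2 * n) C ∧ IsPM1 (2 * n) D ∧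
      SeqSymm (2 * n) A ∧ SeqSymm (2 * n) B ∧ SeqSymm (2 * n) C ∧ SeqSymm (2 * n) D ∧
      ∀ s, 1 ≤ s → s < 2 * n →
        PAF (2 * n) A s + PAF (2 * n) B s + PAF (2 * n) C s + PAF (2 * n) D s = 0 := by
  obtain ⟨A, B, C, D, hA1, hB1, hC1, hD1, hAs, hBs, hCs, hDs, hpaf⟩ := h
  obtain ⟨m, hm⟩ := hn
  have hn0 : 0 < n := by omega
  have hc : 2 * (m+1) = n + 1 := by omega
  set c : ℕ := m + 1 with hcdef
  -- the half-shifted versions of B and D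
  let Bt : ℕ → ℤ := fun j => B ((j + c) % n)
  let Dt : ℕ → ℤ := fun j => D ((j + c) % n)
  have hBt1 : IsPM1 n Bt := fun k _ => hB1 _ (Nat.mod_lt _ hn0)
  have hDt1 : IsPM1 n Dt := fun k _ => hD1 _ (Nat.mod_lt _ hn0)
  have hBtn1 : IsPM1 n (negSeq Bt) := by
    intro k hk
    rcases hBt1 k hk with h' | h' <;> simp [negSeq, h']
  have hDtn1 : IsPM1 n (negSeq Dt) := by
    intro k hk
    rcases hDt1 k hk with h' | h' <;> simp [negSeq, h']
  have hBtS : ∀ j < n, Bt j = Bt (n-1-j) := fun j hj => shift_symm n c hc B hBs j hj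
  have hDtS : ∀ j < n, Dt j = Dt (n-1-j) := fun j hj => shift_symm n c hc D hDs j hj
  have hBtnS : ∀ j < n, negSeq Bt j = negSeq Bt (n-1-j) := by
    intro j hj; simp only [negSeq]; rw [hBtS j hj]
  have hDtnS : ∀ j < n, negSeq Dt j = negSeq Dt (n-1-j) := by
    intro j hj; simp only [negSeq]; rw [hDtS j hj]
  refine ⟨interleave A Bt, interleave A (negSeq Bt), interleave C Dt,
    interleave C (negSeq Dt),
    interleave_pm1 n A Bt hA1 hBt1, interleave_pm1 n A _ hA1 hBtn1,
    interleave_pm1 n C Dt hC1 hDt1, interleave_pm1 n C _ hC1 hDtn1,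
    interleave_symm n A Bt hAs hBtS, interleave_symm n A _ hAs hBtnS,
    interleave_symm n C Dt hCs hDtS, interleave_symm n C _ hCs hDtnS, ?_⟩
  intro s hs1 hs2
  rcases Nat.mod_two_eq_zero_or_one s with hse | hso
  · -- even shift
    obtain ⟨t, rfl⟩ : ∃ t, s = 2*t := ⟨s/2, by omega⟩
    have ht1 : 1 ≤ t := by omega
    have ht2 : t < n := by omega
    rw [paf_interleave_even n t hn0 A Bt, paf_interleave_even n t hn0 A (negSeq Bt),
        paf_interleave_even n t hn0 C Dt, paf_interleave_even n t hn0 C (negSeq Dt),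
        neg_paf, neg_paf]
    have e1 : PAF n Bt t = PAF n B t := shift_paf n c t hn0 B
    have e2 : PAF n Dt t = PAF n D t := shift_paf n c t hn0 D
    have e3 := hpaf t ht1 ht2
    rw [e1, e2]
    linarith
  · -- odd shift: the two members of each pair cancel
    have e1 := paf_interleave_neg_add n s hso A Bt
    have e2 := paf_interleave_neg_add n s hso C Dt
    linarith
end
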